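/- arXiv:2105.08535 — 4 statements merged into one kernel-verified Lean document; each statement's English description precedes it below -/
import Mathlib

section
/- Let f : ℝ → ℝ be analytic at x₀, let k ≥ 1, and let x₀, x₁, …, x_k be real numbers. Define P(a) = Σ_{i=0}^{k} x_i a^i and Q(a) = Σ_{i=0}^{k-1} x_i a^i (so Q = P with the top coefficient x_k removed). Then the k-th Taylor coefficient at 0 of f ∘ P is an affine function of x_k whose slope is f'(x₀) and whose bias is the k-th Taylor coefficient at 0 of f ∘ Q; that is, (1/k!)·(d^k/da^k)(f∘P)(0) = f'(x₀)·x_k + (1/k!)·(d^k/da^k)(f∘Q)(0). -/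
open Filter Asymptotics Topology

private lemma poly_eval_zero (x : ℕ → ℝ) (n : ℕ) (hn : 0 < n) :
    ∑ i ∈ Finset.range n, x i * (0:ℝ) ^ i = x 0 := by
  obtain ⟨m, rfl⟩ := Nat.exists_eq_succ_of_ne_zero hn.ne'
  simp [Finset.sum_range_succ', pow_succ]

private lemma coeff_eq_zero_of_isLittleO :
    ∀ (k : ℕ) {h : ℝ → ℝ} {p : FormalMultilinearSeries ℝ ℝ ℝ},
      HasFPowerSeriesAt h p 0 → (h =o[𝓝[≠] (0:ℝ)] fun a => a ^ k) →
      ∀ n ≤ k, p.coeff n = 0 := by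
  intro k
  induction k with
  | zero =>
    intro h p hp ho n hn
    obtain rfl : n = 0 := Nat.le_zero.mp hn
    have h0 : h 0 = 0 := by
      have h1 : Tendsto h (𝓝[≠] (0:ℝ)) (𝓝 (h 0)) :=
        (hp.analyticAt.continuousAt.tendsto).mono_left nhdsWithin_le_nhds
      have h2 : Tendsto h (𝓝[≠] (0:ℝ)) (𝓝 0) :=
        (isLittleO_one_iff ℝ).mp (by simpa using ho)
      exact tendsto_nhds_unique h1 h2
    have hcz : p.coeff 0 = h 0 := hp.coeff_zero 1
    rw [hcz, h0]
  | succ k ih =>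
    intro h p hp ho
    have hpow : Tendsto (fun a : ℝ => a ^ (k+1)) (𝓝[≠] (0:ℝ)) (𝓝 0) := by
      have := ((continuous_pow (k+1)).tendsto (0:ℝ)).mono_left
        (nhdsWithin_le_nhds (s := {(0:ℝ)}ᶜ))
      simpa using this
    have h0 : h 0 = 0 := by
      have h1 : Tendsto h (𝓝[≠] (0:ℝ)) (𝓝 (h 0)) :=
        (hp.analyticAt.continuousAt.tendsto).mono_left nhdsWithin_le_nhds
      exact tendsto_nhds_unique h1 (ho.isBigO.trans_tendsto hpow)
    have hq : HasFPowerSeriesAt (dslope h 0) p.fslope 0 :=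
      hp.has_fpower_series_dslope_fslope
    have hog : (dslope h 0) =o[𝓝[≠] (0:ℝ)] fun a => a ^ k := by
      rw [isLittleO_iff]
      intro ε hε
      filter_upwards [isLittleO_iff.mp ho hε, self_mem_nhdsWithin] with a ha hane
      have hane' : a ≠ 0 := hane
      have hd : dslope h 0 a = h a / a := by
        rw [dslope_of_ne h hane', slope_def_field]
        simp [h0]
      rw [hd]
      have hna : ‖a‖ ≠ 0 := norm_ne_zero_iff.mpr hane'
      calc ‖h a / a‖ = ‖h a‖ / ‖a‖ := norm_div _ _
        _ ≤ (ε * ‖a ^ (k+1)‖) / ‖a‖ := by gcongr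
        _ = ε * ‖a ^ k‖ := by
            rw [norm_pow, norm_pow, pow_succ]
            field_simp
    have hih := ih hq hog
    intro n hn
    cases n with
    | zero =>
      have hcz : p.coeff 0 = h 0 := hp.coeff_zero 1
      rw [hcz, h0]
    | succ m =>
      have hm : m ≤ k := Nat.succ_le_succ_iff.mp hn
      have := hih m hm
      rwa [FormalMultilinearSeries.coeff_fslope] at this

private lemma iteratedDeriv_eq_zero_of_isLittleO {h : ℝ → ℝ} (hh : AnalyticAt ℝ h 0) {k : ℕ}
    (ho : h =o[𝓝[≠] (0:ℝ)] fun a => a ^ k) : iteratedDeriv k h 0 = 0 := by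
  obtain ⟨p, r, hr⟩ := hh
  have hc : p.coeff k = 0 := coeff_eq_zero_of_isLittleO k ⟨r, hr⟩ ho k le_rfl
  have hfs := hr.factorial_smul 1 k
  rw [iteratedDeriv_eq_iteratedFDeriv, ← hfs]
  have : p k (fun _ => (1:ℝ)) = p.coeff k := rfl
  rw [this, hc, smul_zero]

private lemma itDW_open {V : Set ℝ} (hV : IsOpen V) {a : ℝ} (ha : a ∈ V) (n : ℕ) (f : ℝ → ℝ) :
    iteratedDerivWithin n f V a = iteratedDeriv n f a := by
  rw [iteratedDerivWithin_eq_iteratedFDerivWithin, iteratedDeriv_eq_iteratedFDeriv,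
    iteratedFDerivWithin_of_isOpen n hV ha]

private lemma iteratedDeriv_pow_self (k : ℕ) :
    iteratedDeriv k (fun a : ℝ => a ^ k) = fun _ => (Nat.factorial k : ℝ) := by
  induction k with
  | zero => funext a; simp
  | succ k ih =>
    rw [iteratedDeriv_succ']
    have hd : deriv (fun a : ℝ => a ^ (k+1)) = fun a => ((k:ℝ)+1) * a ^ k := by
      funext a
      simp [deriv_pow_field]
    rw [hd]
    funext a
    have hcpow : ContDiffOn ℝ k (fun a : ℝ => a ^ k) Set.univ := (contDiff_id.pow k).contDiffOn
    rw [← iteratedDerivWithin_univ,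
      iteratedDerivWithin_const_mul (Set.mem_univ a) uniqueDiffOn_univ _ (hcpow a (Set.mem_univ a)),
      iteratedDerivWithin_univ, ih]
    simp [Nat.factorial_succ]

private lemma main_aux (f : ℝ → ℝ) (k : ℕ) (hk : 1 ≤ k) (P Q : ℝ → ℝ) (x0 xk : ℝ)
    (hP : AnalyticAt ℝ P 0) (hQ : AnalyticAt ℝ Q 0) (hP0 : P 0 = x0) (hQ0 : Q 0 = x0)
    (hPQ : ∀ a, P a - Q a = xk * a ^ k) (hf : AnalyticAt ℝ f x0) :
    iteratedDeriv k (fun a => f (P a)) 0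
      = deriv f x0 * xk * (Nat.factorial k : ℝ) + iteratedDeriv k (fun a => f (Q a)) 0 := by
  set c := deriv f x0 with hcdef
  set g1 : ℝ → ℝ := fun a => f (P a) with hg1def
  set g2 : ℝ → ℝ := fun a => f (Q a) with hg2def
  set m : ℝ → ℝ := fun a => c * xk * a ^ k with hmdef
  set h : ℝ → ℝ := fun a => g1 a - g2 a - m a with hhdef
  have hfP0 : AnalyticAt ℝ f (P 0) := by rwa [hP0]
  have hfQ0 : AnalyticAt ℝ f (Q 0) := by rwa [hQ0]
  have hg1 : AnalyticAt ℝ g1 0 := hfP0.comp hP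
  have hg2 : AnalyticAt ℝ g2 0 := hfQ0.comp hQ
  have hm : AnalyticAt ℝ m 0 := (analyticAt_const.mul (analyticAt_id.pow k))
  have hh : AnalyticAt ℝ h 0 := (hg1.sub hg2).sub hm
  -- continuity of deriv f at x0
  have hcont : ContinuousAt (deriv f) x0 := by
    obtain ⟨U, hUsub, hUopen, hxU⟩ := mem_nhds_iff.mp hf.eventually_analyticAt
    have hU : AnalyticOnNhd ℝ f U := fun y hy => hUsub hy
    exact ((hU.deriv) x0 hxU).continuousAt
  have hdiffev : ∀ᶠ y in 𝓝 x0, DifferentiableAt ℝ f y :=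
    hf.eventually_analyticAt.mono fun y hy => hy.differentiableAt
  -- little-o estimate
  have ho : h =o[𝓝[≠] (0:ℝ)] fun a => a ^ k := by
    rw [isLittleO_iff]
    intro ε hε
    set ε' := ε / (|xk| + 1) with hε'def
    have hε' : 0 < ε' := div_pos hε (by positivity)
    have hnear : ∀ᶠ z in 𝓝 c, ‖z - c‖ ≤ ε' := by
      filter_upwards [Metric.closedBall_mem_nhds c hε'] with z hz
      simpa [dist_eq_norm] using hz
    have hev : ∀ᶠ y in 𝓝 x0, DifferentiableAt ℝ f y ∧ ‖deriv f y - c‖ ≤ ε' :=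
      hdiffev.and (hcont.eventually hnear)
    obtain ⟨δ, hδpos, hδ⟩ := Metric.eventually_nhds_iff.mp hev
    have hball : ∀ y ∈ Metric.ball x0 δ, DifferentiableAt ℝ f y ∧ ‖deriv f y - c‖ ≤ ε' :=
      fun y hy => hδ (by simpa [Metric.mem_ball] using hy)
    set g : ℝ → ℝ := fun y => f y - c * y with hgdef
    have hgd : ∀ y ∈ Metric.ball x0 δ, DifferentiableAt ℝ g y :=
      fun y hy => ((hball y hy).1).sub (differentiableAt_id.const_mul c : DifferentiableAt ℝ (fun y : ℝ => c * y) y)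
    have hgderiv : ∀ y ∈ Metric.ball x0 δ, ‖deriv g y‖ ≤ ε' := by
      intro y hy
      have h1 : deriv g y = deriv f y - c := by
        rw [hgdef]
        rw [deriv_fun_sub (hball y hy).1 (differentiableAt_id.const_mul c : DifferentiableAt ℝ (fun y : ℝ => c * y) y)]
        have hcy : deriv (fun y : ℝ => c * y) y = c := by
          simpa using ((hasDerivAt_id y).const_mul c).deriv
        rw [hcy]
      rw [h1]
      exact (hball y hy).2
    have hPmem : ∀ᶠ a in 𝓝 (0:ℝ), P a ∈ Metric.ball x0 δ := by
      have hPt : Tendsto P (𝓝 0) (𝓝 x0) := hP0 ▸ hP.continuousAt.tendsto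
      exact hPt (Metric.ball_mem_nhds x0 hδpos)
    have hQmem : ∀ᶠ a in 𝓝 (0:ℝ), Q a ∈ Metric.ball x0 δ := by
      have hQt : Tendsto Q (𝓝 0) (𝓝 x0) := hQ0 ▸ hQ.continuousAt.tendsto
      exact hQt (Metric.ball_mem_nhds x0 hδpos)
    filter_upwards [hPmem.filter_mono nhdsWithin_le_nhds,
      hQmem.filter_mono nhdsWithin_le_nhds] with a haP haQ
    have h1 : h a = g (P a) - g (Q a) := by
      simp only [hhdef, hgdef, hg1def, hg2def, hmdef]
      linear_combination c * hPQ a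
    have hmvt : ‖g (P a) - g (Q a)‖ ≤ ε' * ‖P a - Q a‖ :=
      (convex_ball x0 δ).norm_image_sub_le_of_norm_deriv_le hgd hgderiv haQ haP
    have hεbound : ε' * |xk| ≤ ε := by
      have h2 : ε' * |xk| ≤ ε' * (|xk| + 1) := by
        have := abs_nonneg xk
        nlinarith
      have h3 : ε' * (|xk| + 1) = ε := by
        rw [hε'def]
        field_simp
      linarith
    calc ‖h a‖ = ‖g (P a) - g (Q a)‖ := by rw [h1]
      _ ≤ ε' * ‖P a - Q a‖ := hmvt
      _ = ε' * ‖xk * a ^ k‖ := by rw [hPQ a]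
      _ = ε' * |xk| * ‖a ^ k‖ := by
          rw [norm_mul]
          simp [Real.norm_eq_abs]
          ring
      _ ≤ ε * ‖a ^ k‖ := mul_le_mul_of_nonneg_right hεbound (norm_nonneg _)
  have hzero : iteratedDeriv k h 0 = 0 := iteratedDeriv_eq_zero_of_isLittleO hh ho
  -- monomial derivative
  have hmval : iteratedDeriv k m 0 = c * xk * (Nat.factorial k : ℝ) := by
    have : iteratedDeriv k m = fun a : ℝ => c * xk * iteratedDeriv k (fun b : ℝ => b ^ k) a := by
      funext a
      have hcpow : ContDiffOn ℝ k (fun b : ℝ => b ^ k) Set.univ := (contDiff_id.pow k).contDiffOn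
      rw [← iteratedDerivWithin_univ, hmdef,
        iteratedDerivWithin_const_mul (Set.mem_univ a) uniqueDiffOn_univ _ (hcpow a (Set.mem_univ a)),
        iteratedDerivWithin_univ]
    rw [this, iteratedDeriv_pow_self]
  -- linearity on an open neighborhood
  obtain ⟨V, hVsub, hVopen, hV0⟩ :=
    mem_nhds_iff.mp (hg1.eventually_analyticAt.and hg2.eventually_analyticAt)
  have hA1 : AnalyticOnNhd ℝ g1 V := fun y hy => (hVsub hy).1
  have hA2 : AnalyticOnNhd ℝ g2 V := fun y hy => (hVsub hy).2
  have hg1V : ContDiffOn ℝ k g1 V := hA1.contDiffOn hVopen.uniqueDiffOn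
  have hg2V : ContDiffOn ℝ k g2 V := hA2.contDiffOn hVopen.uniqueDiffOn
  have hmV : ContDiffOn ℝ k m V := (contDiff_const.mul (contDiff_id.pow k)).contDiffOn
  have hhV : ContDiffOn ℝ k h V := (hg1V.sub hg2V).sub hmV
  have hfun : g1 = h + (g2 + m) := by
    funext a
    simp only [hhdef, Pi.add_apply]
    ring
  have step1 : iteratedDerivWithin k g1 V 0
      = iteratedDerivWithin k h V 0 + iteratedDerivWithin k (g2 + m) V 0 := by
    rw [hfun]
    exact iteratedDerivWithin_add hV0 hVopen.uniqueDiffOn (hhV 0 hV0) ((hg2V.add hmV) 0 hV0)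
  have step2 : iteratedDerivWithin k (g2 + m) V 0
      = iteratedDerivWithin k g2 V 0 + iteratedDerivWithin k m V 0 :=
    iteratedDerivWithin_add hV0 hVopen.uniqueDiffOn (hg2V 0 hV0) (hmV 0 hV0)
  have final : iteratedDeriv k g1 0 = iteratedDeriv k h 0 + (iteratedDeriv k g2 0 + iteratedDeriv k m 0) := by
    rw [← itDW_open hVopen hV0 k g1, step1, step2, itDW_open hVopen hV0 k h,
      itDW_open hVopen hV0 k g2, itDW_open hVopen hV0 k m]
  rw [final, hzero, hmval]
  ring

/-- For `f` analytic at `x 0` and `k ≥ 1`, the `k`-th Taylor coefficient at `0`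
of `f ∘ P` (where `P a = ∑_{i=0}^k x i * a^i`) is an affine function of `x k` with slope
`f' (x 0)` and bias the `k`-th Taylor coefficient of `f ∘ Q` (where `Q` drops the top term). -/
theorem taylor_coeff_affine (f : ℝ → ℝ) (k : ℕ) (hk : 1 ≤ k) (x : ℕ → ℝ)
    (hf : AnalyticAt ℝ f (x 0)) :
    (1 / (Nat.factorial k) : ℝ) *
        iteratedDeriv k (fun a : ℝ => f (∑ i ∈ Finset.range (k + 1), x i * a ^ i)) 0
      = deriv f (x 0) * x k +
        (1 / (Nat.factorial k) : ℝ) *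
          iteratedDeriv k (fun a : ℝ => f (∑ i ∈ Finset.range k, x i * a ^ i)) 0 := by
  have hP : AnalyticAt ℝ (fun a : ℝ => ∑ i ∈ Finset.range (k + 1), x i * a ^ i) 0 :=
    Finset.analyticAt_fun_sum _ (fun i _ => analyticAt_const.mul (analyticAt_id.pow i))
  have hQ : AnalyticAt ℝ (fun a : ℝ => ∑ i ∈ Finset.range k, x i * a ^ i) 0 :=
    Finset.analyticAt_fun_sum _ (fun i _ => analyticAt_const.mul (analyticAt_id.pow i))
  have hP0 : (∑ i ∈ Finset.range (k + 1), x i * (0:ℝ) ^ i) = x 0 :=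
    poly_eval_zero x (k+1) (Nat.succ_pos k)
  have hQ0 : (∑ i ∈ Finset.range k, x i * (0:ℝ) ^ i) = x 0 :=
    poly_eval_zero x k hk
  have hPQ : ∀ a : ℝ, (∑ i ∈ Finset.range (k + 1), x i * a ^ i)
      - (∑ i ∈ Finset.range k, x i * a ^ i) = x k * a ^ k := by
    intro a
    rw [Finset.sum_range_succ]
    ring
  have H := main_aux f k hk _ _ (x 0) (x k) hP hQ hP0 hQ0 hPQ hf
  rw [H]
  have hkfac : (Nat.factorial k : ℝ) ≠ 0 := Nat.cast_ne_zero.mpr (Nat.factorial_ne_zero k)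
  field_simp
end

section
/- Let x : ℝ → ℝ be analytic at 0 with x(0) > 0, let r ∈ ℝ, and let f(a) = (x(a))^r (real power). Write x_i and f_i for the i-th Taylor coefficients at 0 of x and f respectively. Then for every k ≥ 1: f_k = (1/x₀)·( r·f₀·x_k + Σ_{i=1}^{k-1} ( (i/k)·(r+1) − 1 )·f_{k-i}·x_i ). -/
open Finset

lemma itd_contDiffOn {f : ℝ → ℝ} {s : Set ℝ} (hs : IsOpen s)
    (hf : ContDiffOn ℝ (⊤ : ℕ∞) f s) (m : ℕ) :
    ContDiffOn ℝ (⊤ : ℕ∞) (iteratedDeriv m f) s := by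
  induction m with
  | zero => simpa [iteratedDeriv_zero] using hf
  | succ m ih =>
    rw [iteratedDeriv_succ]
    exact ih.deriv_of_isOpen hs (by simp)

lemma itd_diffAt {f : ℝ → ℝ} {s : Set ℝ} (hs : IsOpen s)
    (hf : ContDiffOn ℝ (⊤ : ℕ∞) f s) (m : ℕ) {a : ℝ} (ha : a ∈ s) :
    DifferentiableAt ℝ (iteratedDeriv m f) a :=
  (((itd_contDiffOn hs hf m).contDiffAt (hs.mem_nhds ha)).differentiableAt (by simp))

lemma leibniz_itd {f g : ℝ → ℝ} {s : Set ℝ} (hs : IsOpen s)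
    (hf : ContDiffOn ℝ (⊤ : ℕ∞) f s) (hg : ContDiffOn ℝ (⊤ : ℕ∞) g s) (n : ℕ) :
    ∀ a ∈ s, iteratedDeriv n (fun t => f t * g t) a =
      ∑ i ∈ range (n + 1),
        (n.choose i : ℝ) * iteratedDeriv i f a * iteratedDeriv (n - i) g a := by
  induction n with
  | zero => intro a _; simp [iteratedDeriv_zero]
  | succ n ih =>
    intro a ha
    have hev : iteratedDeriv n (fun t => f t * g t) =ᶠ[nhds a]
        (fun b => ∑ i ∈ range (n + 1),
          (n.choose i : ℝ) * iteratedDeriv i f b * iteratedDeriv (n - i) g b) := by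
      filter_upwards [hs.mem_nhds ha] with b hb using ih b hb
    rw [iteratedDeriv_succ, hev.deriv_eq]
    have hdsum : deriv (fun b => ∑ i ∈ range (n + 1),
          (n.choose i : ℝ) * iteratedDeriv i f b * iteratedDeriv (n - i) g b) a =
        ∑ i ∈ range (n + 1), (n.choose i : ℝ) *
          (iteratedDeriv (i + 1) f a * iteratedDeriv (n - i) g a +
           iteratedDeriv i f a * iteratedDeriv (n - i + 1) g a) := by
      simp only [mul_assoc]
      rw [deriv_fun_sum]
      · refine Finset.sum_congr rfl fun i hi => ?_
        have h1 : DifferentiableAt ℝ (iteratedDeriv i f) a := itd_diffAt hs hf i ha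
        have h2 : DifferentiableAt ℝ (iteratedDeriv (n - i) g) a := itd_diffAt hs hg _ ha
        rw [deriv_const_mul _ (h1.fun_mul h2), deriv_fun_mul h1 h2, ← iteratedDeriv_succ,
          ← iteratedDeriv_succ]
      · intro i _
        exact ((itd_diffAt hs hf i ha).mul (itd_diffAt hs hg _ ha)).const_mul _
    rw [hdsum]
    -- combinatorial identity
    set A : ℕ → ℝ := fun i => iteratedDeriv i f a
    set B : ℕ → ℝ := fun i => iteratedDeriv i g a
    have split : ∑ i ∈ range (n + 1), (n.choose i : ℝ) *
          (A (i + 1) * B (n - i) + A i * B (n - i + 1)) =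
        (∑ i ∈ range (n + 1), (n.choose i : ℝ) * A (i + 1) * B (n - i)) +
        (∑ i ∈ range (n + 1), (n.choose i : ℝ) * A i * B (n - i + 1)) := by
      rw [← Finset.sum_add_distrib]; exact Finset.sum_congr rfl fun i _ => by ring
    rw [split]
    have h2 : ∑ i ∈ range (n + 1), (n.choose i : ℝ) * A i * B (n - i + 1) =
        ∑ i ∈ range (n + 2), (n.choose i : ℝ) * A i * B (n + 1 - i) := by
      conv_rhs => rw [Finset.sum_range_succ]
      have hz : (n.choose (n + 1) : ℝ) = 0 := by exact_mod_cast Nat.choose_succ_self n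
      rw [hz, zero_mul, zero_mul, add_zero]
      refine Finset.sum_congr rfl fun i hi => ?_
      have : i ≤ n := Nat.lt_succ_iff.mp (Finset.mem_range.mp hi)
      rw [Nat.succ_sub this]
    rw [h2, Finset.sum_range_succ' (fun i => (n.choose i : ℝ) * A i * B (n + 1 - i)) (n + 1),
      Finset.sum_range_succ' (fun i => ((n + 1).choose i : ℝ) * A i * B (n + 1 - i)) (n + 1)]
    simp only [Nat.choose_zero_right, Nat.cast_one, Nat.sub_zero, Nat.succ_sub_succ]
    rw [← add_assoc, ← Finset.sum_add_distrib]
    congr 1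
    refine Finset.sum_congr rfl fun i hi => ?_
    have hch : ((n + 1).choose (i + 1) : ℝ) = (n.choose i : ℝ) + (n.choose (i + 1) : ℝ) := by
      rw [← Nat.cast_add, Nat.choose_succ_succ]
    rw [hch]
    ring

lemma iteratedDeriv_const'' (n : ℕ) (c : ℝ) :
    iteratedDeriv n (fun _ : ℝ => c) = fun _ => if n = 0 then c else 0 := by
  induction n with
  | zero => simp [iteratedDeriv_zero]
  | succ m ih =>
    rw [iteratedDeriv_succ, ih]
    ext a
    rcases Nat.eq_zero_or_pos m with h | h <;> simp [h]

lemma itd_const_mul {g : ℝ → ℝ} {s : Set ℝ} (hs : IsOpen s)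
    (hg : ContDiffOn ℝ (⊤ : ℕ∞) g s) (c : ℝ) (m : ℕ) :
    ∀ a ∈ s, iteratedDeriv m (fun t => c * g t) a = c * iteratedDeriv m g a := by
  intro a ha
  have h := leibniz_itd hs (contDiffOn_const (c := c)) hg m a ha
  rw [show (fun t => c * g t) = (fun t => (fun _ : ℝ => c) t * g t) from rfl, h]
  rw [Finset.sum_eq_single 0]
  · simp [iteratedDeriv_const'']
  · intro i _ hi
    simp [iteratedDeriv_const'', hi]
  · simp

/-- Taylor-coefficient recurrence for `f = x ^ r` (real power) at `0`, where `x`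
is analytic at `0` with `x 0 > 0`:
`f_k = (1/x₀) (r f₀ x_k + ∑_{i=1}^{k-1} ((i/k)(r+1) − 1) f_{k-i} x_i)` for `k ≥ 1`.
Here `xc j` and `fc j` are the `j`-th Taylor coefficients `(1/j!)·g⁽ʲ⁾(0)` of `x` and `f`. -/
theorem rpow_taylor_coeff_recurrence (x : ℝ → ℝ) (hx : AnalyticAt ℝ x 0) (hx0 : 0 < x 0)
    (r : ℝ) (xc fc : ℕ → ℝ)
    (hxc : ∀ j, xc j = (1 / (Nat.factorial j) : ℝ) * iteratedDeriv j x 0)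
    (hfc : ∀ j, fc j = (1 / (Nat.factorial j) : ℝ) *
        iteratedDeriv j (fun a : ℝ => (x a) ^ r) 0)
    (k : ℕ) (hk : 1 ≤ k) :
    fc k = (1 / xc 0) *
        (r * fc 0 * xc k +
          ∑ i ∈ Finset.Icc 1 (k - 1),
            (((i : ℝ) / (k : ℝ)) * (r + 1) - 1) * fc (k - i) * xc i) := by
  obtain ⟨n, rfl⟩ : ∃ n, k = n + 1 := ⟨k - 1, by omega⟩
  set f : ℝ → ℝ := fun a => (x a) ^ r with hfdef
  -- the open set
  obtain ⟨s, hsub, hs_open, hs0⟩ :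
      ∃ s, s ⊆ {a | AnalyticAt ℝ x a} ∩ x ⁻¹' Set.Ioi 0 ∧ IsOpen s ∧ (0 : ℝ) ∈ s := by
    have h1 : {a | AnalyticAt ℝ x a} ∈ nhds (0 : ℝ) := hx.eventually_analyticAt
    have h2 : x ⁻¹' Set.Ioi 0 ∈ nhds (0 : ℝ) :=
      hx.continuousAt.preimage_mem_nhds (Ioi_mem_nhds hx0)
    rcases mem_nhds_iff.mp (Filter.inter_mem h1 h2) with ⟨s, h1, h2, h3⟩
    exact ⟨s, h1, h2, h3⟩
  have hxan : ∀ a ∈ s, AnalyticAt ℝ x a := fun a ha => (hsub ha).1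
  have hxpos : ∀ a ∈ s, 0 < x a := fun a ha => (hsub ha).2
  have hxcd : ContDiffOn ℝ (⊤ : ℕ∞) x s := fun a ha => ((hxan a ha).contDiffAt).contDiffWithinAt
  have hfcd : ContDiffOn ℝ (⊤ : ℕ∞) f s := fun a ha =>
    (((hxan a ha).contDiffAt).rpow_const_of_ne (hxpos a ha).ne').contDiffWithinAt
  have hdf : ContDiffOn ℝ (⊤ : ℕ∞) (deriv f) s := hfcd.deriv_of_isOpen hs_open (by simp)
  have hdx : ContDiffOn ℝ (⊤ : ℕ∞) (deriv x) s := hxcd.deriv_of_isOpen hs_open (by simp)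
  have hrdx : ContDiffOn ℝ (⊤ : ℕ∞) (fun t => r * deriv x t) s := contDiffOn_const.mul hdx
  -- the ODE
  have heq : ∀ a ∈ s, x a * deriv f a = f a * (r * deriv x a) := by
    intro a ha
    have hd : HasDerivAt x (deriv x a) a :=
      ((hxan a ha).differentiableAt).hasDerivAt
    have hdf' : HasDerivAt f (deriv x a * r * x a ^ (r - 1)) a :=
      hd.rpow_const (Or.inl (hxpos a ha).ne')
    rw [hdf'.deriv]
    have hpow : x a ^ (r - 1) * x a = x a ^ r := by
      rw [← Real.rpow_add_one (hxpos a ha).ne' (r - 1), sub_add_cancel]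
    simp only [hfdef]
    linear_combination r * deriv x a * hpow
  -- equality of iterated derivatives at 0
  have hEq : iteratedDeriv n (fun t => x t * deriv f t) 0 =
      iteratedDeriv n (fun t => f t * (r * deriv x t)) 0 := by
    apply Filter.EventuallyEq.iteratedDeriv_eq
    filter_upwards [hs_open.mem_nhds hs0] with a ha using heq a ha
  rw [leibniz_itd hs_open hxcd hdf n 0 hs0, leibniz_itd hs_open hfcd hrdx n 0 hs0] at hEq
  -- rewrite iterated derivatives via coefficients
  have hxval : ∀ j, iteratedDeriv j x 0 = (j.factorial : ℝ) * xc j := by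
    intro j
    rw [hxc j]
    field_simp
  have hfval : ∀ j, iteratedDeriv j f 0 = (j.factorial : ℝ) * fc j := by
    intro j
    rw [hfc j]
    field_simp
  have hdfval : ∀ j, iteratedDeriv j (deriv f) 0 = ((j + 1).factorial : ℝ) * fc (j + 1) := by
    intro j
    rw [← iteratedDeriv_succ', hfval]
  have hrdxval : ∀ j, iteratedDeriv j (fun t => r * deriv x t) 0 =
      r * (((j + 1).factorial : ℝ) * xc (j + 1)) := by
    intro j
    rw [itd_const_mul hs_open hdx r j 0 hs0, ← iteratedDeriv_succ', hxval]
  simp only [hxval, hfval, hdfval, hrdxval] at hEq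
  -- clean up factorials: E
  have hnat : ∀ i ≤ n, n.choose i * i.factorial * (n - i + 1).factorial =
      n.factorial * (n + 1 - i) := by
    intro i hi
    have h1 := Nat.choose_mul_factorial_mul_factorial hi
    rw [Nat.factorial_succ]
    have h2 : n + 1 - i = n - i + 1 := by omega
    rw [h2]
    calc n.choose i * i.factorial * ((n - i + 1) * (n - i).factorial)
        = (n - i + 1) * (n.choose i * i.factorial * (n - i).factorial) := by ring
      _ = (n - i + 1) * n.factorial := by rw [h1]
      _ = n.factorial * (n - i + 1) := by ring
  have hE : (n.factorial : ℝ) * ∑ i ∈ range (n + 1),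
        ((n + 1 - i : ℕ) : ℝ) * xc i * fc (n + 1 - i) =
      (n.factorial : ℝ) * (r * ∑ i ∈ range (n + 1),
        ((n + 1 - i : ℕ) : ℝ) * fc i * xc (n + 1 - i)) := by
    have hR : (n.factorial : ℝ) * (r * ∑ i ∈ range (n + 1),
          ((n + 1 - i : ℕ) : ℝ) * fc i * xc (n + 1 - i)) =
        ∑ i ∈ range (n + 1), (n.factorial : ℝ) *
          (r * (((n + 1 - i : ℕ) : ℝ) * fc i * xc (n + 1 - i))) := by
      rw [Finset.mul_sum, Finset.mul_sum]
    rw [hR, Finset.mul_sum]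
    calc ∑ i ∈ range (n + 1), (n.factorial : ℝ) * (((n + 1 - i : ℕ) : ℝ) * xc i * fc (n + 1 - i))
        = ∑ i ∈ range (n + 1), (n.choose i : ℝ) * ((i.factorial : ℝ) * xc i) *
            (((n - i + 1).factorial : ℝ) * fc (n - i + 1)) := by
          refine Finset.sum_congr rfl fun i hi => ?_
          have hi' : i ≤ n := Nat.lt_succ_iff.mp (Finset.mem_range.mp hi)
          have hcast : ((n.choose i : ℕ) : ℝ) * (i.factorial : ℝ) * ((n - i + 1).factorial : ℝ)
              = (n.factorial : ℝ) * ((n + 1 - i : ℕ) : ℝ) := by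
            exact_mod_cast congrArg Nat.cast (hnat i hi')
          have h2 : n - i + 1 = n + 1 - i := by omega
          rw [h2] at hcast ⊢
          linear_combination (-(xc i * fc (n + 1 - i))) * hcast
      _ = ∑ i ∈ range (n + 1), (n.choose i : ℝ) * ((i.factorial : ℝ) * fc i) *
            (r * (((n - i + 1).factorial : ℝ) * xc (n - i + 1))) := hEq
      _ = ∑ i ∈ range (n + 1), (n.factorial : ℝ) *
            (r * (((n + 1 - i : ℕ) : ℝ) * fc i * xc (n + 1 - i))) := by
          refine Finset.sum_congr rfl fun i hi => ?_
          have hi' : i ≤ n := Nat.lt_succ_iff.mp (Finset.mem_range.mp hi)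
          have hcast : ((n.choose i : ℕ) : ℝ) * (i.factorial : ℝ) * ((n - i + 1).factorial : ℝ)
              = (n.factorial : ℝ) * ((n + 1 - i : ℕ) : ℝ) := by
            exact_mod_cast congrArg Nat.cast (hnat i hi')
          have h2 : n - i + 1 = n + 1 - i := by omega
          rw [h2] at hcast ⊢
          linear_combination (r * fc i * xc (n + 1 - i)) * hcast
  have hfacne : (n.factorial : ℝ) ≠ 0 := by positivity
  have hE2 := mul_left_cancel₀ hfacne hE
  -- peel and reindex
  set P : ℝ := ∑ j ∈ range n, ((n - j : ℕ) : ℝ) * xc (j + 1) * fc (n - j) with hP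
  set Q : ℝ := ∑ j ∈ range n, ((j + 1 : ℕ) : ℝ) * fc (n - j) * xc (j + 1) with hQ
  have hLHS : ∑ i ∈ range (n + 1), ((n + 1 - i : ℕ) : ℝ) * xc i * fc (n + 1 - i) =
      P + ((n + 1 : ℕ) : ℝ) * xc 0 * fc (n + 1) := by
    rw [Finset.sum_range_succ' (fun i => ((n + 1 - i : ℕ) : ℝ) * xc i * fc (n + 1 - i)) n]
    simp only [Nat.succ_sub_succ, Nat.sub_zero, hP]
  have hRHS : ∑ i ∈ range (n + 1), ((n + 1 - i : ℕ) : ℝ) * fc i * xc (n + 1 - i) =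
      Q + ((n + 1 : ℕ) : ℝ) * fc 0 * xc (n + 1) := by
    rw [← Finset.sum_range_reflect (fun i => ((n + 1 - i : ℕ) : ℝ) * fc i * xc (n + 1 - i)) (n + 1),
      Finset.sum_range_succ]
    congr 1
    · refine Finset.sum_congr rfl fun j hj => ?_
      have hj' : j < n := Finset.mem_range.mp hj
      have h2 : n + 1 - 1 - j = n - j := by omega
      have h1 : n + 1 - (n - j) = j + 1 := by omega
      simp only [h2, h1]
    · have h0 : n + 1 - 1 - n = 0 := by omega
      simp [h0]
  rw [hLHS, hRHS] at hE2
  -- the goal sum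
  have hgoal : ∑ i ∈ Finset.Icc 1 (n + 1 - 1),
        (((i : ℕ) : ℝ) / ((n + 1 : ℕ) : ℝ) * (r + 1) - 1) * fc (n + 1 - i) * xc i =
      (1 / ((n + 1 : ℕ) : ℝ)) * (r * Q - P) := by
    have hIcc : Finset.Icc 1 (n + 1 - 1) = Finset.Ico 1 (n + 1) := by
      rw [Finset.Ico_add_one_right_eq_Icc]
      norm_num
    rw [hIcc, Finset.sum_Ico_eq_sum_range]
    simp only [Nat.add_sub_cancel]
    rw [hP, hQ, Finset.mul_sum, ← Finset.sum_sub_distrib, Finset.mul_sum]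
    refine Finset.sum_congr rfl fun j hj => ?_
    have hj' : j < n := Finset.mem_range.mp hj
    have h1 : n + 1 - (1 + j) = n - j := by omega
    have hc : ((n - j : ℕ) : ℝ) = (n : ℝ) - (j : ℝ) := by
      rw [Nat.cast_sub hj'.le]
    rw [h1, hc]
    have hne : ((n : ℝ) + 1) ≠ 0 := by positivity
    push_cast
    field_simp
    ring
  rw [hgoal]
  have hxc0 : xc 0 = x 0 := by rw [hxc 0]; simp
  have hxc0ne : xc 0 ≠ 0 := by rw [hxc0]; exact hx0.ne'
  have hne : ((n : ℝ) + 1) ≠ 0 := by positivity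
  push_cast at hE2 ⊢
  field_simp
  linear_combination hE2
end

section
/- Let m ≥ 1, let k ≥ 1, and let X₀, …, X_k be m×m real matrices. Regard M(a) = Σ_{i=0}^{k} a^i X_i and M'(a) = Σ_{i=0}^{k-1} a^i X_i as m×m matrices with entries in the polynomial ring ℝ[a]. Then the coefficient of a^k in det(M) equals trace( adjugate(X₀) · X_k ) plus the coefficient of a^k in det(M'). -/
open Polynomial

lemma sum_det_updateRow_eq_trace {n : Type*} [DecidableEq n] [Fintype n]
    (A B : Matrix n n ℝ) :
    ∑ j, (A.updateRow j (B j)).det = Matrix.trace (A.adjugate * B) := by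
  have h : ∀ j, (A.updateRow j (B j)).det = ∑ i, A.adjugate i j * B j i := by
    intro j
    rw [← Matrix.cramer_transpose_apply, Matrix.cramer_eq_adjugate_mulVec,
      ← Matrix.adjugate_transpose]
    simp [Matrix.mulVec, dotProduct, Matrix.transpose_apply]
  simp_rw [h, Matrix.trace, Matrix.diag, Matrix.mul_apply]
  rw [Finset.sum_comm]

/-- for the polynomial matrix `M(a) = ∑_{i=0}^k aⁱ Xᵢ`, the coefficient of `a^k`
in `det M` equals `trace (adjugate X₀ · X_k)` plus the coefficient of `a^k` in the determinant
of the truncated matrix `M'(a) = ∑_{i=0}^{k-1} aⁱ Xᵢ`. -/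
theorem det_coeff_affine_in_top (m k : ℕ) (hm : 1 ≤ m) (hk : 1 ≤ k)
    (X : ℕ → Matrix (Fin m) (Fin m) ℝ) :
    (Matrix.det
        (∑ i ∈ Finset.range (k + 1),
          (X i).map (fun c => Polynomial.C c * Polynomial.X ^ i))).coeff k
      = Matrix.trace ((X 0).adjugate * X k) +
        (Matrix.det
          (∑ i ∈ Finset.range k,
            (X i).map (fun c => Polynomial.C c * Polynomial.X ^ i))).coeff k := by
  set A : Matrix (Fin m) (Fin m) ℝ[X] :=
    ∑ i ∈ Finset.range k, (X i).map (fun c => Polynomial.C c * Polynomial.X ^ i) with hA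
  set D : Matrix (Fin m) (Fin m) ℝ[X] :=
    (X k).map (fun c => Polynomial.C c * Polynomial.X ^ k) with hD
  rw [Finset.sum_range_succ, ← hA, ← hD]
  -- row-wise expansion of the determinant
  have expand : (A + D).det =
      ∑ s : Finset (Fin m), Matrix.det (Matrix.of (s.piecewise A D)) := by
    exact (Matrix.detRowAlternating (R := ℝ[X]) (n := Fin m)).toMultilinearMap.map_add_univ A D
  -- the constant-coefficient companion matrix
  set E : Matrix (Fin m) (Fin m) ℝ[X] := (X k).map (fun c => Polynomial.C c) with hE
  -- factor out the powers of X from the rows off s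
  have factor : ∀ s : Finset (Fin m),
      Matrix.det (Matrix.of (s.piecewise A D)) =
        ((Polynomial.X : ℝ[X]) ^ k) ^ (Finset.univ.filter (fun i => ¬ i ∈ s)).card *
          Matrix.det (Matrix.of (s.piecewise A E)) := by
    intro s
    have h1 : Matrix.of (s.piecewise A D) =
        Matrix.of (fun i j => (if i ∈ s then (1:ℝ[X]) else Polynomial.X ^ k) *
          Matrix.of (s.piecewise A E) i j) := by
      ext i j : 2
      by_cases hi : i ∈ s
      · erw [Matrix.of_apply, Matrix.of_apply, if_pos hi, one_mul, Matrix.of_apply,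
          s.piecewise_eq_of_mem _ _ hi, s.piecewise_eq_of_mem _ _ hi]
      · erw [Matrix.of_apply, Matrix.of_apply, if_neg hi, Matrix.of_apply,
          s.piecewise_eq_of_notMem _ _ hi, s.piecewise_eq_of_notMem _ _ hi, hD, hE,
          Matrix.map_apply, Matrix.map_apply, mul_comm]
    rw [h1, Matrix.det_mul_column, Finset.prod_ite, Finset.prod_const_one, one_mul,
      Finset.prod_const]
  -- evaluating A at 0 gives X 0
  have hA0 : A.map (fun p => Polynomial.eval 0 p) = X 0 := by
    ext p q
    simp only [hA, Matrix.map_apply, Matrix.sum_apply, eval_finset_sum, eval_mul, eval_pow,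
      eval_C, eval_X]
    rw [Finset.sum_eq_single 0]
    · simp
    · intro i _ hi; simp [zero_pow hi]
    · intro h; exact absurd (Finset.mem_range.mpr hk) h
  -- the value of each term of the expansion
  have key : ∀ s : Finset (Fin m),
      (Matrix.det (Matrix.of (s.piecewise A D))).coeff k =
        if (Finset.univ.filter (fun i => ¬ i ∈ s)).card = 0 then (Matrix.det A).coeff k
        else if (Finset.univ.filter (fun i => ¬ i ∈ s)).card = 1 then
          (Matrix.det (Matrix.of (s.piecewise A E))).coeff 0
        else 0 := by
    intro s
    rw [factor s, ← pow_mul, mul_comm ((Polynomial.X:ℝ[X]) ^ _), Polynomial.coeff_mul_X_pow']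
    by_cases h0 : (Finset.univ.filter (fun i => ¬ i ∈ s)).card = 0
    · have hs : s = Finset.univ := by
        apply Finset.eq_univ_iff_forall.mpr
        intro x
        by_contra hx
        have : (Finset.univ.filter (fun i => ¬ i ∈ s)).card ≠ 0 := by
          rw [Finset.card_ne_zero]
          exact ⟨x, Finset.mem_filter.mpr ⟨Finset.mem_univ x, hx⟩⟩
        exact this h0
      erw [if_pos h0, h0, Nat.mul_zero, if_pos (Nat.zero_le k), Nat.sub_zero, hs,
        Finset.piecewise_univ]
      rfl
    · by_cases h1 : (Finset.univ.filter (fun i => ¬ i ∈ s)).card = 1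
      · rw [if_neg h0, if_pos h1, h1, Nat.mul_one, if_pos le_rfl, Nat.sub_self]
      · have hc2 : 2 ≤ (Finset.univ.filter (fun i => ¬ i ∈ s)).card := by omega
        rw [if_neg h0, if_neg h1, if_neg (by nlinarith)]
  -- assemble the sum
  rw [expand, Polynomial.finset_sum_coeff]
  rw [Finset.sum_congr rfl (fun s _ => key s)]
  set F : Finset (Fin m) → ℝ := fun s =>
    if (Finset.univ.filter (fun i => ¬ i ∈ s)).card = 0 then (Matrix.det A).coeff k
    else if (Finset.univ.filter (fun i => ¬ i ∈ s)).card = 1 then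
      (Matrix.det (Matrix.of (s.piecewise A E))).coeff 0
    else 0 with hF
  have hcard_erase : ∀ i : Fin m,
      (Finset.univ.filter (fun x => ¬ x ∈ Finset.univ.erase i)).card = 1 := by
    intro i
    have h : (Finset.univ.filter (fun x => ¬ x ∈ Finset.univ.erase i)) = {i} := by
      ext x
      simp [Finset.mem_erase]
    rw [h, Finset.card_singleton]
  have hFerase : ∀ i : Fin m, F (Finset.univ.erase i) = ((X 0).updateRow i (X k i)).det := by
    intro i
    have h1 : (Finset.univ.filter
        (fun x => ¬ x ∈ Finset.univ.erase i)).card ≠ 0 := by rw [hcard_erase i]; omega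
    simp only [hF]
    erw [if_neg h1, if_pos (hcard_erase i), Finset.piecewise_erase_univ]
    have h2 : (Matrix.of (Function.update A i (E i))) = Matrix.updateRow A i (E i) := rfl
    rw [h2, Polynomial.coeff_zero_eq_eval_zero, ← Polynomial.coe_evalRingHom,
      RingHom.map_det, RingHom.mapMatrix_apply, Matrix.map_updateRow]
    have hmap : A.map ⇑(Polynomial.evalRingHom 0) = X 0 := by
      rw [Polynomial.coe_evalRingHom]; exact hA0
    have hrow : ⇑(Polynomial.evalRingHom 0) ∘ E i = X k i := by
      funext j; simp [hE, Matrix.map_apply]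
    rw [hmap, hrow]
  have hFuniv : F Finset.univ = (Matrix.det A).coeff k := by
    simp only [hF]
    rw [if_pos (by simp)]
  -- the index set of nonvanishing terms
  set T : Finset (Finset (Fin m)) :=
    insert Finset.univ ((Finset.univ : Finset (Fin m)).image fun i => Finset.univ.erase i)
    with hT
  have hzero : ∀ s ∈ (Finset.univ : Finset (Finset (Fin m))), s ∉ T → F s = 0 := by
    intro s _ hs
    rw [hT, Finset.mem_insert, Finset.mem_image] at hs
    push_neg at hs
    obtain ⟨hs1, hs2⟩ := hs
    have h0 : (Finset.univ.filter (fun i => ¬ i ∈ s)).card ≠ 0 := by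
      intro h
      apply hs1
      apply Finset.eq_univ_iff_forall.mpr
      intro x
      by_contra hx
      have : (Finset.univ.filter (fun i => ¬ i ∈ s)).card ≠ 0 := by
        rw [Finset.card_ne_zero]
        exact ⟨x, Finset.mem_filter.mpr ⟨Finset.mem_univ x, hx⟩⟩
      exact this h
    have h1 : (Finset.univ.filter (fun i => ¬ i ∈ s)).card ≠ 1 := by
      intro h
      obtain ⟨i, hi⟩ := Finset.card_eq_one.mp h
      apply hs2 i (Finset.mem_univ i)
      symm
      ext x
      constructor
      · intro hx
        rw [Finset.mem_erase]
        refine ⟨?_, Finset.mem_univ x⟩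
        intro hxi
        have : x ∈ Finset.univ.filter (fun i => ¬ i ∈ s) := by
          rw [hi, hxi]; exact Finset.mem_singleton_self i
        exact (Finset.mem_filter.mp this).2 hx
      · intro hx
        rw [Finset.mem_erase] at hx
        by_contra hxs
        have : x ∈ ({i} : Finset (Fin m)) := by
          rw [← hi]; exact Finset.mem_filter.mpr ⟨Finset.mem_univ x, hxs⟩
        exact hx.1 (Finset.mem_singleton.mp this)
    simp only [hF]
    rw [if_neg h0, if_neg h1]
  have huniv_not_mem : Finset.univ ∉
      ((Finset.univ : Finset (Fin m)).image fun i => Finset.univ.erase i) := by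
    rw [Finset.mem_image]
    rintro ⟨i, -, hi⟩
    have : i ∈ Finset.univ.erase i := by rw [hi]; exact Finset.mem_univ i
    exact (Finset.mem_erase.mp this).1 rfl
  have hinj : ∀ i ∈ (Finset.univ : Finset (Fin m)), ∀ j ∈ (Finset.univ : Finset (Fin m)),
      Finset.univ.erase i = Finset.univ.erase j → i = j := by
    intro i _ j _ h
    by_contra hij
    have : i ∈ Finset.univ.erase j := Finset.mem_erase.mpr ⟨hij, Finset.mem_univ i⟩
    rw [← h] at this
    exact (Finset.mem_erase.mp this).1 rfl
  calc ∑ s : Finset (Fin m), F s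
      = ∑ s ∈ T, F s := (Finset.sum_subset (Finset.subset_univ T) hzero).symm
    _ = F Finset.univ + ∑ s ∈ ((Finset.univ : Finset (Fin m)).image
          fun i => Finset.univ.erase i), F s := Finset.sum_insert huniv_not_mem
    _ = F Finset.univ + ∑ i : Fin m, F (Finset.univ.erase i) := by
          rw [Finset.sum_image hinj]
    _ = Matrix.trace ((X 0).adjugate * X k) + (Matrix.det A).coeff k := by
          rw [hFuniv, add_comm]
          congr 1
          rw [Finset.sum_congr rfl (fun i _ => hFerase i)]
          exact sum_det_updateRow_eq_trace (X 0) (X k)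
end

section
/- Let m ≥ 1, let U and V be m×m real matrices with UᵀU = I and VᵀV = I, and let σ : Fin m → ℝ. Then adjugate( U · diagonal(σ) · Vᵀ ) = (det U · det V) • ( V · diagonal( i ↦ ∏_{j ≠ i} σ_j ) · Uᵀ ), where the diagonal matrix on the right has i-th diagonal entry equal to the product of all σ_j with j ≠ i. -/
open Matrix

lemma adj_orth {m : ℕ} (U : Matrix (Fin m) (Fin m) ℝ) (hU : Uᵀ * U = 1) :
    U.adjugate = U.det • Uᵀ := by
  have hinv : U⁻¹ = Uᵀ := inv_eq_left_inv hU
  have := Matrix.mul_adjugate U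
  calc U.adjugate = (Uᵀ * U) * U.adjugate := by rw [hU, one_mul]
    _ = Uᵀ * (U.det • 1) := by rw [mul_assoc, this]
    _ = U.det • Uᵀ := by rw [mul_smul_comm, mul_one]

/-- adjugate of an SVD-factored matrix. For orthogonal `U`, `V` and
`σ : Fin m → ℝ`, `adjugate (U ⬝ diagonal σ ⬝ Vᵀ) =
(det U · det V) • (V ⬝ diagonal (i ↦ ∏_{j ≠ i} σ j) ⬝ Uᵀ)`. -/
theorem adjugate_svd (m : ℕ) (hm : 1 ≤ m)
    (U V : Matrix (Fin m) (Fin m) ℝ) (σ : Fin m → ℝ)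
    (hU : Uᵀ * U = 1) (hV : Vᵀ * V = 1) :
    (U * Matrix.diagonal σ * Vᵀ).adjugate
      = (U.det * V.det) •
        (V * Matrix.diagonal (fun i => ∏ j ∈ Finset.univ.erase i, σ j) * Uᵀ) := by
  have hVT : Vᵀᵀ * Vᵀ = 1 := by
    rw [transpose_transpose, mul_eq_one_comm.2 hV]
  rw [adjugate_mul_distrib, adjugate_mul_distrib, adjugate_diagonal,
    adj_orth U hU, adj_orth Vᵀ hVT, det_transpose, transpose_transpose]
  simp only [smul_mul_assoc, mul_smul_comm, smul_smul]
  rw [Matrix.mul_assoc]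
end
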